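/- Let a, b ∈ ℝ with 3·|a| + |b| < 4 and |a| + 3·|b| < 4. Then the bivariate polynomial g(x,y) = x⁴ + a·x³y + b·xy³ + y⁴ is coercive on ℝ². -/

import Mathlib

/-!
By AM-GM, `4 |x³y| ≤ 3x⁴ + y⁴` and `4 |xy³| ≤ x⁴ + 3y⁴`. Hence the mixed terms cost at most
`(3|a| + |b|)/4` of `x⁴` and `(|a| + 3|b|)/4` of `y⁴`, so `g(x,y) ≥ c (x⁴ + y⁴) ≥ c ‖(x,y)‖⁴` with
`c > 0` under the hypotheses, and a quartic lower bound forces `g → +∞`.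
-/

open Filter

/-- `g` is coercive on `ℝ²`: `g(x,y) → +∞` whenever `‖(x,y)‖ → +∞`. -/
def Coercive2 (g : ℝ × ℝ → ℝ) : Prop :=
  Tendsto g (comap (fun p : ℝ × ℝ => ‖p‖) atTop) atTop

theorem tendsto_comap_norm_atTop_of_const_mul_pow_le {E : Type*} [Norm E] {g : E → ℝ} {c : ℝ}
    (hc : 0 < c) {n : ℕ} (hn : n ≠ 0) (hg : ∀ p, c * ‖p‖ ^ n ≤ g p) :
    Tendsto g (comap (fun p : E => ‖p‖) atTop) atTop :=
  tendsto_atTop_mono hg <|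
    ((tendsto_pow_atTop hn).const_mul_atTop hc).comp tendsto_comap

theorem four_mul_pow_three_mul_le (u v : ℝ) : 4 * (u ^ 3 * v) ≤ 3 * u ^ 4 + v ^ 4 := by
  have hfactor : 3 * u ^ 4 + v ^ 4 - 4 * (u ^ 3 * v) = (u - v) ^ 2 * (2 * u ^ 2 + (u + v) ^ 2) := by
    ring
  have : 0 ≤ 3 * u ^ 4 + v ^ 4 - 4 * (u ^ 3 * v) := by rw [hfactor]; positivity
  linarith

theorem four_mul_abs_pow_three_mul_le (u v : ℝ) : 4 * |u ^ 3 * v| ≤ 3 * u ^ 4 + v ^ 4 := by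
  have hneg : 4 * -(u ^ 3 * v) ≤ 3 * u ^ 4 + v ^ 4 := by
    simpa [Even.neg_pow (by decide : Even 4)] using four_mul_pow_three_mul_le u (-v)
  rcases abs_cases (u ^ 3 * v) with ⟨h, _⟩ | ⟨h, _⟩ <;> rw [h]
  exacts [four_mul_pow_three_mul_le u v, hneg]

theorem quartic_lower_bound (a b x y : ℝ) :
    (1 - (3 * |a| + |b|) / 4) * x ^ 4 + (1 - (|a| + 3 * |b|) / 4) * y ^ 4 ≤
      x ^ 4 + a * x ^ 3 * y + b * x * y ^ 3 + y ^ 4 := by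
  have hxy : -(|a| * (3 * x ^ 4 + y ^ 4)) ≤ 4 * (a * x ^ 3 * y) := by
    have := mul_le_mul_of_nonneg_left (four_mul_abs_pow_three_mul_le x y) (abs_nonneg a)
    have := neg_abs_le (a * (x ^ 3 * y))
    rw [abs_mul] at this
    nlinarith
  have hyx : -(|b| * (3 * y ^ 4 + x ^ 4)) ≤ 4 * (b * x * y ^ 3) := by
    have := mul_le_mul_of_nonneg_left (four_mul_abs_pow_three_mul_le y x) (abs_nonneg b)
    have := neg_abs_le (b * (y ^ 3 * x))
    rw [abs_mul] at this
    nlinarith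
  nlinarith

theorem norm_pow_four_le (p : ℝ × ℝ) : ‖p‖ ^ 4 ≤ p.1 ^ 4 + p.2 ^ 4 := by
  have h4 : Even 4 := by decide
  rw [Prod.norm_def, Real.norm_eq_abs, Real.norm_eq_abs]
  rcases le_total |p.1| |p.2| with h | h
  · rw [max_eq_right h, h4.pow_abs]
    linarith [h4.pow_nonneg p.1]
  · rw [max_eq_left h, h4.pow_abs]
    linarith [h4.pow_nonneg p.2]

/-- `g(x,y) = x⁴ + a x³ y + b x y³ + y⁴` is coercive on `ℝ²` whenever
`3|a| + |b| < 4` and `|a| + 3|b| < 4`. -/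
theorem stmt18 (a b : ℝ) (h1 : 3 * |a| + |b| < 4) (h2 : |a| + 3 * |b| < 4) :
    Coercive2 (fun p : ℝ × ℝ =>
      p.1 ^ 4 + a * p.1 ^ 3 * p.2 + b * p.1 * p.2 ^ 3 + p.2 ^ 4) := by
  set c := min (1 - (3 * |a| + |b|) / 4) (1 - (|a| + 3 * |b|) / 4)
  have hc : 0 < c := lt_min (by linarith) (by linarith)
  refine tendsto_comap_norm_atTop_of_const_mul_pow_le hc four_ne_zero fun p => ?_
  calc c * ‖p‖ ^ 4 ≤ c * (p.1 ^ 4 + p.2 ^ 4) := by gcongr; exact norm_pow_four_le p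
    _ ≤ (1 - (3 * |a| + |b|) / 4) * p.1 ^ 4 + (1 - (|a| + 3 * |b|) / 4) * p.2 ^ 4 := by
      rw [mul_add]
      gcongr
      exacts [min_le_left _ _, min_le_right _ _]
    _ ≤ _ := quartic_lower_bound a b p.1 p.2
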